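/- arXiv:1403.3831 — 3 statements merged into one kernel-verified Lean document; each statement's English description precedes it below -/
import Mathlib

section
/- Let (M, ρ) be a metric space and T a minimal spanning tree on (M, ρ). Then every edge e of T is exact: if removing e from T partitions M into components M₁ and M₂, then ρ(e) = inf{ρ(x,y) : x ∈ M₁, y ∈ M₂}. -/
open scoped ENNReal

namespace MSTPaper

variable {M : Type*}

/-- The length of an edge `e` of a graph on a metric space: the extended
distance between its endpoints. -/
noncomputable def edgeLen [MetricSpace M] (e : Sym2 M) : ℝ≥0∞ :=
  Sym2.lift ⟨fun x y => edist x y, fun x y => edist_comm x y⟩ e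

/-- The length of a graph: the (possibly infinite) sum of the lengths of its edges. -/
noncomputable def graphLen [MetricSpace M] (G : SimpleGraph M) : ℝ≥0∞ :=
  ∑' e : G.edgeSet, edgeLen (e : Sym2 M)

/-- The distance between two subsets of a metric space. -/
noncomputable def setDist [MetricSpace M] (A B : Set M) : ℝ≥0∞ :=
  ⨅ x ∈ A, ⨅ y ∈ B, edist x y

/-- A minimal spanning tree on the metric space `M`: a spanning tree of finite
length whose length equals the infimum of lengths of all spanning trees on `M`. -/
def IsMST [MetricSpace M] (T : SimpleGraph M) : Prop :=
  T.IsTree ∧ graphLen T < ⊤ ∧ ∀ T' : SimpleGraph M, T'.IsTree → graphLen T ≤ graphLen T'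

/-- An edge `uv` of `G` is exact if its length equals the distance between the
two connected components obtained by removing it. -/
def ExactEdge [MetricSpace M] (G : SimpleGraph M) (u v : M) : Prop :=
  edist u v = setDist {x | (G.deleteEdges {s(u,v)}).Reachable u x}
                      {x | (G.deleteEdges {s(u,v)}).Reachable v x}

end MSTPaper

/-!
Exchange argument. Removing the edge `ab` from the tree `T` leaves exactly two components,
the one of `a` and the one of `b`. If some `x` in the first and `y` in the second were closer
than `a` and `b`, then swapping `ab` for `xy` would give a spanning tree again (`xy` reconnects
the two sides and, joining unreachable vertices, closes no cycle) whose length is smaller by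
`ρ(a, b) - ρ(x, y) > 0`; this is a genuine decrease because the length of `T` is finite.
-/

namespace SimpleGraph

variable {V : Type*} {G : SimpleGraph V} {a b x y : V}

theorem Walk.reachable_deleteEdges_or {u v : V} (p : G.Walk u v)
    (hu : (G.deleteEdges {s(a, b)}).Reachable a u ∨ (G.deleteEdges {s(a, b)}).Reachable b u) :
    (G.deleteEdges {s(a, b)}).Reachable a v ∨ (G.deleteEdges {s(a, b)}).Reachable b v := by
  induction p with
  | nil => exact hu
  | @cons u w v huw _ ih =>
    apply ih
    by_cases he : s(u, w) = s(a, b)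
    · rcases Sym2.eq_iff.mp he with ⟨rfl, rfl⟩ | ⟨rfl, rfl⟩
      · exact .inr .rfl
      · exact .inl .rfl
    · have hadj : (G.deleteEdges {s(a, b)}).Adj u w := by simpa [huw] using he
      exact hu.imp (·.trans hadj.reachable) (·.trans hadj.reachable)

theorem Preconnected.reachable_deleteEdges_or (hG : G.Preconnected) (a b z : V) :
    (G.deleteEdges {s(a, b)}).Reachable a z ∨ (G.deleteEdges {s(a, b)}).Reachable b z :=
  (hG a z).some.reachable_deleteEdges_or (.inl .rfl)

theorem deleteEdges_sup_edge_of_adj (hab : G.Adj a b) : G.deleteEdges {s(a, b)} ⊔ edge a b = G := by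
  ext u v
  simp only [sup_adj, deleteEdges_adj, Set.mem_singleton_iff, edge_adj, Sym2.eq_iff]
  grind [G.ne_of_adj, hab.symm]

theorem IsAcyclic.not_reachable_deleteEdges (hG : G.IsAcyclic) (hab : G.Adj a b)
    (hx : (G.deleteEdges {s(a, b)}).Reachable a x) (hy : (G.deleteEdges {s(a, b)}).Reachable b y) :
    ¬ (G.deleteEdges {s(a, b)}).Reachable x y := fun h =>
  isAcyclic_iff_forall_adj_isBridge.mp hG hab ((hx.trans h).trans hy.symm)

theorem IsTree.deleteEdges_sup_edge (hT : G.IsTree) (hab : G.Adj a b)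
    (hx : (G.deleteEdges {s(a, b)}).Reachable a x) (hy : (G.deleteEdges {s(a, b)}).Reachable b y) :
    (G.deleteEdges {s(a, b)} ⊔ edge x y).IsTree := by
  set H := G.deleteEdges {s(a, b)}
  have hxy : ¬ H.Reachable x y := hT.isAcyclic.not_reachable_deleteEdges hab hx hy
  refine ⟨?_, (hT.isAcyclic.anti (deleteEdges_le _)).sup_edge_of_not_reachable hxy⟩
  have hH : H ≤ H ⊔ edge x y := le_sup_left
  have hadj : (H ⊔ edge x y).Adj x y :=
    .inr ((edge_adj ..).mpr ⟨.inl ⟨rfl, rfl⟩, fun h => hxy (h ▸ .rfl)⟩)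
  have hxz (z : V) : (H ⊔ edge x y).Reachable x z := by
    rcases hT.connected.preconnected.reachable_deleteEdges_or a b z with h | h
    · exact (hx.symm.trans h).mono hH
    · exact hadj.reachable.trans ((hy.symm.trans h).mono hH)
  exact connected_iff_exists_forall_reachable _ |>.mpr ⟨x, hxz⟩

end SimpleGraph

namespace MSTPaper

open SimpleGraph

variable {M : Type*}

theorem setDist_le_edist [MetricSpace M] {A B : Set M} {x y : M} (hx : x ∈ A) (hy : y ∈ B) :
    setDist A B ≤ edist x y :=
  iInf₂_le_of_le x hx (iInf₂_le y hy)

theorem exists_edist_lt_of_setDist_lt [MetricSpace M] {A B : Set M} {r : ℝ≥0∞}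
    (h : setDist A B < r) : ∃ x ∈ A, ∃ y ∈ B, edist x y < r := by
  simpa only [setDist, iInf_lt_iff, exists_prop] using h

theorem graphLen_sup_edge [MetricSpace M] {G : SimpleGraph M} {x y : M} (hxy : x ≠ y)
    (hG : ¬ G.Adj x y) : graphLen (G ⊔ edge x y) = edist x y + graphLen G := by
  have hdisj : Disjoint {s(x, y)} G.edgeSet := Set.disjoint_singleton_left.mpr hG
  rw [graphLen, graphLen, edgeSet_sup, edgeSet_edge_of_ne hxy, Set.union_comm,
    ENNReal.summable.tsum_union_disjoint (f := fun e : Sym2 M => edgeLen e) hdisj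
      ENNReal.summable, tsum_singleton]
  rfl

theorem graphLen_eq_edist_add_deleteEdges [MetricSpace M] {G : SimpleGraph M} {a b : M}
    (hab : G.Adj a b) : graphLen G = edist a b + graphLen (G.deleteEdges {s(a, b)}) := by
  conv_lhs => rw [← deleteEdges_sup_edge_of_adj hab]
  exact graphLen_sup_edge hab.ne (by simp)

/-- Every edge of a minimal spanning tree is exact. -/
theorem mst_edges_exact [MetricSpace M] (T : SimpleGraph M) (hT : IsMST T) :
    ∀ a b : M, T.Adj a b → ExactEdge T a b := by
  obtain ⟨hTree, hfin, hmin⟩ := hT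
  intro a b hab
  refine le_antisymm ?_ (setDist_le_edist (Reachable.refl a) (Reachable.refl b))
  by_contra! hlt
  obtain ⟨x, hx, y, hy, hxy⟩ := exists_edist_lt_of_setDist_lt hlt
  set H := T.deleteEdges {s(a, b)}
  have hnr : ¬ H.Reachable x y := hTree.isAcyclic.not_reachable_deleteEdges hab hx hy
  have hswap := hmin _ (hTree.deleteEdges_sup_edge hab hx hy)
  have hne : x ≠ y := fun h => hnr (h ▸ .rfl)
  rw [graphLen_eq_edist_add_deleteEdges hab] at hswap hfin
  rw [graphLen_sup_edge hne (fun h => hnr h.reachable)] at hswap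
  exact hxy.not_ge ((ENNReal.add_le_add_iff_right (ENNReal.add_ne_top.mp hfin.ne).2).mp hswap)

end MSTPaper
end

section
/- Let M = {1/n : n ≥ 1} ∪ {−1/n : n ≥ 1} ⊆ ℝ with the standard metric. Then there is no minimal spanning tree on (M, ρ). -/
/-!
A spanning tree contains a path from `1` to `-1`, of length at least `2`, and infinitely many
vertices off that path, each with an edge of positive length; so every spanning tree is longer
than `2`. On the other hand the chains `1, 1/2, 1/3, …` and `-1, -1/2, -1/3, …` have length `1`
each, and joining them by the edge between `±1/(N+1)` gives a connected graph of length
`2 + 2/(N+1)`, whose spanning trees are no longer. Hence the infimum `2` is not attained.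
-/

open scoped ENNReal

namespace MSTPaper

variable {M : Type*}

open SimpleGraph Filter Topology

section GraphLength

variable [MetricSpace M]

@[simp]
theorem edgeLen_mk (x y : M) : edgeLen s(x, y) = edist x y := rfl

theorem graphLen_mono {G H : SimpleGraph M} (h : G ≤ H) : graphLen G ≤ graphLen H :=
  ENNReal.tsum_mono_subtype _ (edgeSet_subset_edgeSet.2 h)

theorem graphLen_sup_le (G H : SimpleGraph M) : graphLen (G ⊔ H) ≤ graphLen G + graphLen H := by
  rw [graphLen, edgeSet_sup]
  exact ENNReal.tsum_union_le _ _ _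

theorem graphLen_fromEdgeSet_le (s : Set (Sym2 M)) :
    graphLen (fromEdgeSet s) ≤ ∑' e : s, edgeLen (e : Sym2 M) := by
  rw [graphLen, edgeSet_fromEdgeSet]
  exact ENNReal.tsum_mono_subtype _ Set.sdiff_subset

theorem graphLen_edge_le (x y : M) : graphLen (edge x y) ≤ edist x y :=
  (graphLen_fromEdgeSet_le _).trans_eq (tsum_singleton _ _)

theorem sum_edgeLen_le_graphLen {G : SimpleGraph M} {s : Finset (Sym2 M)}
    (hs : (s : Set (Sym2 M)) ⊆ G.edgeSet) : ∑ e ∈ s, edgeLen e ≤ graphLen G := by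
  rw [← Finset.tsum_subtype]
  exact ENNReal.tsum_mono_subtype _ hs

theorem edist_le_sum_edgeLen {G : SimpleGraph M} {x y : M} (w : G.Walk x y) :
    edist x y ≤ (w.edges.map edgeLen).sum := by
  induction w with
  | nil => simp
  | @cons a b c _ w ih =>
    calc edist a c ≤ edist a b + edist b c := edist_triangle a b c
      _ ≤ edist a b + (w.edges.map edgeLen).sum := by gcongr
      _ = _ := by simp

/-- A path between `x` and `y` misses some vertex, and an edge at that vertex adds positive
length. -/
theorem edist_lt_graphLen [Infinite M] {G : SimpleGraph M} (hG : G.Connected) (x y : M) :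
    edist x y < graphLen G := by
  classical
  obtain ⟨w⟩ := hG.preconnected x y
  let p := w.bypass
  have hp : p.IsPath := w.bypass_isPath
  obtain ⟨v, hv⟩ := Infinite.exists_notMem_finset p.support.toFinset
  rw [List.mem_toFinset] at hv
  obtain ⟨q⟩ := hG.preconnected v x
  have hvx : v ≠ x := fun h => hv (h ▸ p.start_mem_support)
  have hadj : G.Adj v q.snd := q.adj_snd (Walk.not_nil_of_ne hvx)
  have hnotin : s(v, q.snd) ∉ p.edges.toFinset := fun h =>
    hv (p.fst_mem_support_of_mem_edges (List.mem_toFinset.1 h))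
  calc edist x y < edist x y + edist v q.snd :=
        ENNReal.lt_add_right (edist_ne_top x y) (edist_pos.2 hadj.ne).ne'
    _ ≤ ∑ e ∈ p.edges.toFinset, edgeLen e + edgeLen s(v, q.snd) := by
        rw [List.sum_toFinset _ hp.isTrail.edges_nodup, edgeLen_mk]
        gcongr
        exact edist_le_sum_edgeLen p
    _ = ∑ e ∈ insert s(v, q.snd) p.edges.toFinset, edgeLen e := by
        rw [Finset.sum_insert hnotin, add_comm]
    _ ≤ graphLen G := by
        refine sum_edgeLen_le_graphLen fun e he => ?_
        rcases Finset.mem_insert.1 he with rfl | he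
        · exact hadj
        · exact p.edges_subset_edgeSet (List.mem_toFinset.1 he)

end GraphLength

section Chain

variable {V : Type*}

def chainGraph (a : ℕ → V) : SimpleGraph V :=
  fromEdgeSet (Set.range fun n => s(a n, a (n + 1)))

theorem chainGraph_reachable (a : ℕ → V) (m n : ℕ) :
    (chainGraph a).Reachable (a m) (a n) := by
  suffices h : ∀ n, (chainGraph a).Reachable (a 0) (a n) from (h m).symm.trans (h n)
  intro n
  induction n with
  | zero => rfl
  | succ n ih =>
    refine ih.trans ?_
    by_cases h : a n = a (n + 1)
    · rw [h]
    · exact Adj.reachable ((fromEdgeSet_adj _).2 ⟨⟨n, rfl⟩, h⟩)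

theorem graphLen_chainGraph_le [MetricSpace V] (a : ℕ → V) :
    graphLen (chainGraph a) ≤ ∑' n, edist (a n) (a (n + 1)) :=
  (graphLen_fromEdgeSet_le _).trans
    (ENNReal.tsum_le_tsum_comp_of_surjective Set.rangeFactorization_surjective _)

end Chain

theorem tsum_edist_succ_le_of_antitone {u : ℕ → ℝ} (hu : Antitone u) {c : ℝ}
    (hc : ∀ n, c ≤ u n) : ∑' n, edist (u n) (u (n + 1)) ≤ ENNReal.ofReal (u 0 - c) := by
  have hstep : ∀ n, 0 ≤ u n - u (n + 1) := fun n => sub_nonneg.2 (hu n.le_succ)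
  refine ENNReal.tsum_le_of_sum_range_le fun m => ?_
  simp_rw [edist_dist, Real.dist_eq, abs_of_nonneg (hstep _)]
  rw [← ENNReal.ofReal_sum_of_nonneg fun n _ => hstep n, Finset.sum_range_sub']
  exact ENNReal.ofReal_le_ofReal (by linarith [hc m])

abbrev twoSidedHarmonic : Set ℝ :=
  {x : ℝ | ∃ n : ℕ, 1 ≤ n ∧ (x = 1 / (n : ℝ) ∨ x = -(1 / (n : ℝ)))}

noncomputable def posPt (n : ℕ) : twoSidedHarmonic :=
  ⟨1 / ((n : ℝ) + 1), n + 1, Nat.le_add_left 1 n, .inl (by push_cast; rfl)⟩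

noncomputable def negPt (n : ℕ) : twoSidedHarmonic :=
  ⟨-(1 / ((n : ℝ) + 1)), n + 1, Nat.le_add_left 1 n, .inr (by push_cast; rfl)⟩

theorem posPt_or_negPt (x : twoSidedHarmonic) : ∃ n, x = posPt n ∨ x = negPt n := by
  obtain ⟨x, n, hn, hx⟩ := x
  obtain ⟨k, rfl⟩ := Nat.exists_eq_add_of_le' hn
  refine ⟨k, hx.imp (fun h => ?_) (fun h => ?_)⟩ <;> ext <;> simp [h, posPt, negPt]

theorem posPt_injective : Function.Injective posPt := by
  intro m n h
  simpa [posPt] using congrArg Subtype.val h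

instance : Infinite twoSidedHarmonic := Infinite.of_injective posPt posPt_injective

theorem edist_posPt_negPt (n : ℕ) :
    edist (posPt n) (negPt n) = ENNReal.ofReal (2 / (n + 1)) := by
  have h : (posPt n : ℝ) - negPt n = 2 / (n + 1) := by simp only [posPt, negPt]; ring
  rw [edist_dist, Subtype.dist_eq, Real.dist_eq, h, abs_of_pos (by positivity)]

theorem tsum_edist_posPt_succ_le : ∑' n, edist (posPt n) (posPt (n + 1)) ≤ 1 := by
  have hu : Antitone fun n => (posPt n : ℝ) := fun m n h => by simp only [posPt]; gcongr
  exact (tsum_edist_succ_le_of_antitone hu fun n => by simp only [posPt]; positivity).trans_eq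
    (by simp [posPt])

theorem edist_negPt (m n : ℕ) : edist (negPt m) (negPt n) = edist (posPt m) (posPt n) := by
  simp only [edist_dist, Subtype.dist_eq, posPt, negPt, dist_neg_neg]

noncomputable def bridgedChains (N : ℕ) : SimpleGraph twoSidedHarmonic :=
  chainGraph posPt ⊔ chainGraph negPt ⊔ edge (posPt N) (negPt N)

theorem bridgedChains_connected (N : ℕ) : (bridgedChains N).Connected := by
  have hpos : ∀ m n, (bridgedChains N).Reachable (posPt m) (posPt n) := fun m n =>
    (chainGraph_reachable posPt m n).mono (le_sup_left.trans le_sup_left)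
  have hneg : ∀ m n, (bridgedChains N).Reachable (negPt m) (negPt n) := fun m n =>
    (chainGraph_reachable negPt m n).mono (le_sup_right.trans le_sup_left)
  have hbridge : (bridgedChains N).Reachable (posPt N) (negPt N) := by
    refine Adj.reachable (Or.inr ((edge_adj _ _ _ _).2 ⟨.inl ⟨rfl, rfl⟩, fun h => ?_⟩))
    have := congrArg Subtype.val h
    simp only [posPt, negPt] at this
    linarith [show (0 : ℝ) < 1 / ((N : ℝ) + 1) by positivity]
  rw [connected_iff_exists_forall_reachable]
  refine ⟨posPt 0, fun x => ?_⟩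
  obtain ⟨n, rfl | rfl⟩ := posPt_or_negPt x
  · exact hpos 0 n
  · exact ((hpos 0 N).trans hbridge).trans (hneg N n)

theorem graphLen_bridgedChains_le (N : ℕ) :
    graphLen (bridgedChains N) ≤ 2 + ENNReal.ofReal (2 / (N + 1)) :=
  calc graphLen (bridgedChains N)
      ≤ graphLen (chainGraph posPt) + graphLen (chainGraph negPt)
        + graphLen (edge (posPt N) (negPt N)) :=
        (graphLen_sup_le _ _).trans (add_le_add_left (graphLen_sup_le _ _) _)
    _ ≤ 1 + 1 + ENNReal.ofReal (2 / (N + 1)) := by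
        gcongr
        · exact (graphLen_chainGraph_le _).trans tsum_edist_posPt_succ_le
        · refine (graphLen_chainGraph_le _).trans ?_
          simpa only [edist_negPt] using tsum_edist_posPt_succ_le
        · exact (graphLen_edge_le _ _).trans_eq (edist_posPt_negPt N)
    _ = 2 + ENNReal.ofReal (2 / (N + 1)) := by norm_num

theorem exists_isTree_graphLen_le (N : ℕ) :
    ∃ T : SimpleGraph twoSidedHarmonic,
      T.IsTree ∧ graphLen T ≤ 2 + ENNReal.ofReal (2 / (N + 1)) :=
  let ⟨T, hle, hT⟩ := (bridgedChains_connected N).exists_isTree_le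
  ⟨T, hT, (graphLen_mono hle).trans (graphLen_bridgedChains_le N)⟩

/-- The set `{1/n : n ≥ 1} ∪ {-1/n : n ≥ 1} ⊆ ℝ` admits no minimal spanning tree. -/
theorem no_mst_two_sided_harmonic :
    ¬ ∃ T : SimpleGraph ({x : ℝ | ∃ n : ℕ, 1 ≤ n ∧ (x = 1 / (n : ℝ) ∨ x = -(1 / (n : ℝ)))}),
      IsMST T := by
  rintro ⟨T, hT, -, hmin⟩
  have hlim : Tendsto (fun N : ℕ => 2 + ENNReal.ofReal (2 / (N + 1))) atTop (𝓝 2) := by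
    have h : Tendsto (fun N : ℕ => 2 / ((N : ℝ) + 1)) atTop (𝓝 0) := by
      simpa only [mul_one_div, mul_zero] using
        tendsto_one_div_add_atTop_nhds_zero_nat.const_mul (2 : ℝ)
    simpa using tendsto_const_nhds.add (ENNReal.tendsto_ofReal h)
  have hle : graphLen T ≤ 2 := ge_of_tendsto' hlim fun N =>
    let ⟨T', hT', hlen⟩ := exists_isTree_graphLen_le N
    (hmin T' hT').trans hlen
  have hlt := edist_lt_graphLen hT.connected (posPt 0) (negPt 0)
  rw [edist_posPt_negPt] at hlt
  norm_num at hlt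
  exact hlt.not_ge hle

end MSTPaper
end

section
/- Let T = (M, E, ω) be a weighted tree with positive weight function ω and finite total weight ω(T) = Σ_{e∈E} ω(e) < ∞. Define ρ^T_1(v,w) as the sum of ω(e) over edges e of the path T[v,w], and ρ^T_∞(v,w) as the maximum of ω(e) over these edges. Then ρ^T_1 is a metric on M and T is a minimal spanning tree on (M, ρ^T_1). In particular, every tree with at most countably many edges is isomorphic to a minimal spanning tree of some metric space. -/
universe u v

open scoped ENNReal

open scoped NNReal

noncomputable section

theorem ENNReal.tsum_subtype_le_tsum_finset_sum {α β : Type*} {s : Set α} (a : α → ℝ≥0∞)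
    (F : β → Finset α) (hs : ∀ x ∈ s, ∃ b, x ∈ F b) :
    ∑' x : s, a x ≤ ∑' b, ∑ x ∈ F b, a x :=
  calc ∑' x : s, a x = ∑' x, s.indicator a x := tsum_subtype s a
    _ ≤ ∑' x, ∑' b, (F b : Set α).indicator a x := ENNReal.tsum_le_tsum fun x => by
        by_cases hx : x ∈ s
        · obtain ⟨b, hb⟩ := hs x hx
          calc s.indicator a x = (F b : Set α).indicator a x := by
                rw [Set.indicator_of_mem hx, Set.indicator_of_mem (Finset.mem_coe.2 hb)]
            _ ≤ _ := ENNReal.le_tsum b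
        · simp [Set.indicator_of_notMem hx]
    _ = ∑' b, ∑' x, (F b : Set α).indicator a x := ENNReal.tsum_comm
    _ = ∑' b, ∑ x ∈ F b, a x := tsum_congr fun b => by
        rw [← tsum_subtype]; exact (F b).tsum_subtype a

namespace SimpleGraph.IsTree

variable {V : Type*} {G : SimpleGraph V} (hG : G.IsTree) {u v w : V}

def path (u v : V) : G.Walk u v :=
  (hG.existsUnique_path u v).exists.choose

theorem isPath_path (u v : V) : (hG.path u v).IsPath :=
  (hG.existsUnique_path u v).exists.choose_spec

theorem eq_path {p : G.Walk u v} (hp : p.IsPath) : p = hG.path u v :=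
  (hG.existsUnique_path u v).unique hp (hG.isPath_path u v)

variable [DecidableEq V]

def pathEdges (u v : V) : Finset (Sym2 V) :=
  (hG.path u v).edges.toFinset

theorem pathEdges_eq_of_isPath {p : G.Walk u v} (hp : p.IsPath) :
    hG.pathEdges u v = p.edges.toFinset := by
  rw [pathEdges, ← hG.eq_path hp]

theorem pathEdges_comm (u v : V) : hG.pathEdges u v = hG.pathEdges v u := by
  rw [hG.pathEdges_eq_of_isPath (hG.isPath_path v u).reverse, Walk.edges_reverse,
    List.toFinset_reverse, pathEdges]

theorem pathEdges_of_adj (h : G.Adj u v) : hG.pathEdges u v = {s(u, v)} := by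
  simp [hG.pathEdges_eq_of_isPath (Path.singleton h).2]

theorem pathEdges_eq_empty_iff : hG.pathEdges u v = ∅ ↔ u = v := by
  rw [pathEdges, List.toFinset_eq_empty_iff, Walk.edges_eq_nil]
  refine ⟨Walk.Nil.eq, ?_⟩
  rintro rfl
  rw [← hG.eq_path Walk.IsPath.nil]
  exact Walk.nil_nil

theorem coe_pathEdges_subset_edgeSet (u v : V) : ↑(hG.pathEdges u v) ⊆ G.edgeSet :=
  fun _ he => (hG.path u v).edges_subset_edgeSet (List.mem_toFinset.1 he)

theorem pathEdges_subset_union (u v w : V) :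
    hG.pathEdges u w ⊆ hG.pathEdges u v ∪ hG.pathEdges v w := by
  let p := (hG.path u v).append (hG.path v w)
  rw [hG.pathEdges_eq_of_isPath p.bypass_isPath, pathEdges, pathEdges, ← List.toFinset_append,
    ← Walk.edges_append]
  exact fun e he => List.mem_toFinset.2 (p.edges_bypass_subset_edges (List.mem_toFinset.1 he))

theorem exists_adj_mem_pathEdges {H : SimpleGraph V} (hH : H.Connected) {e : Sym2 V}
    (he : e ∈ G.edgeSet) : ∃ x y, H.Adj x y ∧ e ∈ hG.pathEdges x y := by
  induction e with
  | _ a b =>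
    let S := {x | (G.deleteEdges {s(a, b)}).Reachable a x}
    have hbS : b ∉ S := isAcyclic_iff_forall_isBridge.1 hG.isAcyclic he
    obtain ⟨d, -, hdS, hdS'⟩ := (hH.preconnected a b).some.exists_boundary_dart S .rfl hbS
    refine ⟨d.fst, d.snd, d.adj, ?_⟩
    by_contra hne
    have hq := (hG.path d.fst d.snd).toDeleteEdges {s(a, b)} fun f hf hfe =>
      hne (List.mem_toFinset.2 (Set.mem_singleton_iff.1 hfe ▸ hf))
    exact hdS' (hdS.trans ⟨hq⟩)

def pathEdgesBetween : Sym2 V → Finset (Sym2 V) :=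
  Sym2.lift ⟨hG.pathEdges, hG.pathEdges_comm⟩

theorem pathEdgesBetween_mk (u v : V) : hG.pathEdgesBetween s(u, v) = hG.pathEdges u v := rfl

variable (c : Sym2 V → ℝ≥0)

def pathWeight (u v : V) : ℝ≥0 :=
  ∑ e ∈ hG.pathEdges u v, c e

theorem pathWeight_eq_zero_iff (hc : ∀ e ∈ G.edgeSet, c e ≠ 0) :
    hG.pathWeight c u v = 0 ↔ u = v := by
  rw [pathWeight, Finset.sum_eq_zero_iff, ← hG.pathEdges_eq_empty_iff,
    Finset.eq_empty_iff_forall_notMem]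
  exact ⟨fun h e he => hc e (hG.coe_pathEdges_subset_edgeSet u v he) (h e he),
    fun h e he => absurd he (h e)⟩

theorem pathWeight_comm (u v : V) : hG.pathWeight c u v = hG.pathWeight c v u := by
  rw [pathWeight, pathWeight, pathEdges_comm]

theorem pathWeight_triangle (u v w : V) :
    hG.pathWeight c u w ≤ hG.pathWeight c u v + hG.pathWeight c v w :=
  calc hG.pathWeight c u w ≤ ∑ e ∈ hG.pathEdges u v ∪ hG.pathEdges v w, c e :=
        Finset.sum_le_sum_of_subset (hG.pathEdges_subset_union u v w)
    _ ≤ _ := le_self_add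
    _ = _ := Finset.sum_union_inter

theorem pathWeight_eq_sum {p : G.Walk u v} (hp : p.IsPath) :
    hG.pathWeight c u v = (p.edges.map c).sum := by
  rw [pathWeight, hG.pathEdges_eq_of_isPath hp, List.sum_toFinset _ hp.isTrail.edges_nodup]

abbrev pathMetric (hc : ∀ e ∈ G.edgeSet, c e ≠ 0) : MetricSpace V where
  dist u v := hG.pathWeight c u v
  edist u v := hG.pathWeight c u v
  dist_self u := by simp [hG.pathWeight_eq_zero_iff c hc]
  dist_comm u v := by rw [pathWeight_comm]
  dist_triangle u v w := mod_cast hG.pathWeight_triangle c u v w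
  eq_of_dist_eq_zero h := (hG.pathWeight_eq_zero_iff c hc).1 (mod_cast h)
  edist_dist u v := by simp

end SimpleGraph.IsTree

end

namespace MSTPaper

section PathMetric

variable {V : Type*} [DecidableEq V] {G : SimpleGraph V} (hG : G.IsTree) (c : Sym2 V → ℝ≥0)
  (hc : ∀ e ∈ G.edgeSet, c e ≠ 0)

theorem edgeLen_pathMetric (e : Sym2 V) :
    @edgeLen V (hG.pathMetric c hc) e = ∑ f ∈ hG.pathEdgesBetween e, (c f : ℝ≥0∞) := by
  induction e with
  | _ u v => exact ENNReal.ofNNReal_finsetSum _ _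

theorem edgeLen_pathMetric_of_mem {e : Sym2 V} (he : e ∈ G.edgeSet) :
    @edgeLen V (hG.pathMetric c hc) e = c e := by
  induction e with
  | _ u v =>
    rw [edgeLen_pathMetric, hG.pathEdgesBetween_mk, hG.pathEdges_of_adj he,
      Finset.sum_singleton]

theorem graphLen_pathMetric :
    @graphLen V (hG.pathMetric c hc) G = ∑' e : G.edgeSet, (c e : ℝ≥0∞) :=
  tsum_congr fun e => edgeLen_pathMetric_of_mem hG c hc e.2

theorem graphLen_pathMetric_le {H : SimpleGraph V} (hH : H.Connected) :
    @graphLen V (hG.pathMetric c hc) G ≤ @graphLen V (hG.pathMetric c hc) H :=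
  calc @graphLen V (hG.pathMetric c hc) G = ∑' e : G.edgeSet, (c e : ℝ≥0∞) :=
        graphLen_pathMetric hG c hc
    _ ≤ ∑' e : H.edgeSet, ∑ f ∈ hG.pathEdgesBetween e, (c f : ℝ≥0∞) :=
        ENNReal.tsum_subtype_le_tsum_finset_sum _ _ fun f hf => by
          obtain ⟨x, y, hxy, hf⟩ := hG.exists_adj_mem_pathEdges hH hf
          exact ⟨⟨s(x, y), hxy⟩, hf⟩
    _ = @graphLen V (hG.pathMetric c hc) H :=
        tsum_congr fun e => (edgeLen_pathMetric hG c hc e).symm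

theorem isMST_pathMetric (hsum : Summable fun e : G.edgeSet => c e) :
    @IsMST V (hG.pathMetric c hc) G := by
  refine ⟨hG, ?_, fun T' hT' => graphLen_pathMetric_le hG c hc hT'.connected⟩
  rw [graphLen_pathMetric]
  exact (ENNReal.tsum_coe_ne_top_iff_summable.2 hsum).lt_top

end PathMetric

theorem exists_isMST_iso_of_countable_edgeSet {V : Type*} {S : SimpleGraph V} (hS : S.IsTree)
    (hcount : S.edgeSet.Countable) :
    ∃ (inst : MetricSpace V) (S' : SimpleGraph V), @IsMST V inst S' ∧ Nonempty (S ≃g S') := by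
  classical
  have := hcount.to_subtype
  obtain ⟨ε, hε, _, hε_sum, -⟩ := NNReal.exists_pos_sum_of_countable one_ne_zero S.edgeSet
  let c : Sym2 V → ℝ≥0 := fun e => if he : e ∈ S.edgeSet then ε ⟨e, he⟩ else 0
  have hc : ∀ e ∈ S.edgeSet, c e ≠ 0 := fun e he => by simp [c, he, (hε _).ne']
  have hsum : Summable fun e : S.edgeSet => c e := hε_sum.summable.congr fun e => by simp [c]
  exact ⟨hS.pathMetric c hc, S, isMST_pathMetric hS c hc hsum, ⟨.refl⟩⟩

/-- For a weighted tree `T` with positive weights and finite total weight, the path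
metric `ρ^T_1` is a metric on the vertex set for which `T` is a minimal spanning
tree; in particular, every tree with at most countably many edges is isomorphic to
a minimal spanning tree of some metric space. -/
theorem weighted_tree_is_mst {M : Type u} (T : SimpleGraph M) (hT : T.IsTree)
    (ω : Sym2 M → ℝ) (hpos : ∀ e ∈ T.edgeSet, 0 < ω e)
    (hsum : Summable fun e : T.edgeSet => ω (e : Sym2 M)) :
    (∃ inst : MetricSpace M,
        (∀ v w : M, ∀ p : T.Path v w, @dist M inst.toDist v w = (p.1.edges.map ω).sum) ∧
        @IsMST M inst T) ∧
    (∀ (V : Type v) (S : SimpleGraph V), S.IsTree → S.edgeSet.Countable →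
        ∃ (inst : MetricSpace V) (S' : SimpleGraph V),
          @IsMST V inst S' ∧ Nonempty (S ≃g S')) := by
  classical
  refine ⟨?_, fun V S hS hcount => exists_isMST_iso_of_countable_edgeSet hS hcount⟩
  let c : Sym2 M → ℝ≥0 := fun e => (ω e).toNNReal
  have hc : ∀ e ∈ T.edgeSet, (c e : ℝ) = ω e := fun e he =>
    Real.coe_toNNReal _ (hpos e he).le
  refine ⟨hT.pathMetric c fun e he => (Real.toNNReal_pos.2 (hpos e he)).ne', fun v w p => ?_,
    isMST_pathMetric hT c _ (NNReal.summable_coe.1 (hsum.congr fun e => (hc e e.2).symm))⟩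
  change ((hT.pathWeight c v w : ℝ≥0) : ℝ) = _
  rw [hT.pathWeight_eq_sum c p.2, NNReal.coe_list_sum, List.map_map]
  exact congrArg List.sum (List.map_congr_left fun e he => hc e (p.1.edges_subset_edgeSet he))

end MSTPaper
end
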